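/- Let G be a countable group generated by a finite symmetric set S, and let μ be a symmetric probability measure whose support is S. If the drift l(μ) = 0 (i.e. the growth of word lengths along the walk is slower than linear), then the entropy h(G, μ) = 0. -/

import Mathlib

open Filter

/-- The word length of `g` with respect to a generating set `S`. -/
noncomputable def wordLength {G : Type*} [Group G] (S : Set G) (g : G) : ℕ :=
  sInf {n | ∃ w : List G, (∀ x ∈ w, x ∈ S) ∧ w.length = n ∧ w.prod = g}

/-- The sphere of radius `n`: elements of word length exactly `n`. -/
def wordSphere {G : Type*} [Group G] (S : Set G) (n : ℕ) : Set G :=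
  {g | wordLength S g = n}

/-- Shannon entropy `H(ν) = −Σ_g ν(g) log ν(g)` (natural logarithm, `0 log 0 = 0`). -/
noncomputable def shannonEntropy {G : Type*} (ν : G → ℝ) : ℝ :=
  -∑ᶠ g, ν g * Real.log (ν g)

/-- Convolution of two densities on a group: `(ν₁ * ν₂)(g) = Σ_{ab = g} ν₁(a) ν₂(b)`. -/
noncomputable def convMeas {G : Type*} [Group G] (ν₁ ν₂ : G → ℝ) : G → ℝ :=
  fun g => ∑ᶠ a, ν₁ a * ν₂ (a⁻¹ * g)

/-- The `n`-fold convolution `μ^{*n}` of a density `μ` with itself. -/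
noncomputable def convPow {G : Type*} [Group G] (μ : G → ℝ) : ℕ → G → ℝ
  | 0 => Set.indicator {(1 : G)} (fun _ => (1 : ℝ))
  | n + 1 => convMeas (convPow μ n) μ

/-- `l_n(μ) = Σ_g μ^{*n}(g) l_S(g)`, the expected word length after `n` steps. -/
noncomputable def meanLength {G : Type*} [Group G] (S : Set G) (μ : G → ℝ) (n : ℕ) : ℝ :=
  ∑ᶠ g, convPow μ n g * (wordLength S g : ℝ)

/-!
An element of word length `k` is a product of `k` letters of `S`, so there are at most `|S|^k`
of them and the weights `(2|S|)^{-|g|}` have total mass at most `2` on `S^n`. Gibbs' inequality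
against these weights gives `H(μ^{*n}) ≤ log (2|S|) · l_n(μ) + 1`; dividing by `n` yields
`0 ≤ h ≤ log (2|S|) · l(μ) = 0`.
-/

open Function Pointwise Finset

section Convolution

variable {G : Type*} [Group G]

lemma support_convMeas_subset (ν₁ ν₂ : G → ℝ) :
    support (convMeas ν₁ ν₂) ⊆ support ν₁ * support ν₂ := by
  intro g hg
  obtain ⟨a, ha⟩ : ∃ a, ν₁ a * ν₂ (a⁻¹ * g) ≠ 0 := by
    by_contra! h
    exact hg (finsum_eq_zero_of_forall_eq_zero h)
  exact ⟨a, left_ne_zero_of_mul ha, a⁻¹ * g, right_ne_zero_of_mul ha, mul_inv_cancel_left a g⟩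

lemma convMeas_nonneg {ν₁ ν₂ : G → ℝ} (h₁ : 0 ≤ ν₁) (h₂ : 0 ≤ ν₂) : 0 ≤ convMeas ν₁ ν₂ :=
  fun _ => finsum_nonneg fun _ => mul_nonneg (h₁ _) (h₂ _)

lemma finsum_convMeas {ν₁ ν₂ : G → ℝ} (h₁ : (support ν₁).Finite) (h₂ : (support ν₂).Finite) :
    ∑ᶠ g, convMeas ν₁ ν₂ g = (∑ᶠ a, ν₁ a) * ∑ᶠ b, ν₂ b := by
  obtain ⟨A, hA⟩ := h₁.exists_finset_coe
  have hsub : ∀ g, support (fun a => ν₁ a * ν₂ (a⁻¹ * g)) ⊆ A := fun g a ha =>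
    hA ▸ left_ne_zero_of_mul ha
  have hfin : ∀ a, (support fun g => ν₁ a * ν₂ (a⁻¹ * g)).Finite := fun a =>
    (h₂.preimage (mul_right_injective a⁻¹).injOn).subset fun g hg => right_ne_zero_of_mul hg
  calc ∑ᶠ g, convMeas ν₁ ν₂ g = ∑ᶠ g, ∑ a ∈ A, ν₁ a * ν₂ (a⁻¹ * g) :=
        finsum_congr fun g => finsum_eq_sum_of_support_subset _ (hsub g)
    _ = ∑ a ∈ A, ν₁ a * ∑ᶠ b, ν₂ b := by
        rw [finsum_sum_comm _ _ fun a _ => hfin a]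
        refine Finset.sum_congr rfl fun a _ => ?_
        rw [mul_finsum, ← finsum_comp_equiv (Equiv.mulLeft a)]
        simp only [Equiv.coe_mulLeft, inv_mul_cancel_left]
    _ = (∑ᶠ a, ν₁ a) * ∑ᶠ b, ν₂ b := by
        rw [← Finset.sum_mul, finsum_eq_sum_of_support_subset _ hA.ge]

lemma convPow_nonneg {μ : G → ℝ} (hμ : 0 ≤ μ) : ∀ n, 0 ≤ convPow μ n
  | 0 => Set.indicator_nonneg fun _ _ => zero_le_one
  | n + 1 => convMeas_nonneg (convPow_nonneg hμ n) hμ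

lemma support_convPow_subset (μ : G → ℝ) : ∀ n, support (convPow μ n) ⊆ support μ ^ n
  | 0 => by simp [convPow]
  | n + 1 => (support_convMeas_subset _ _).trans <| by
      rw [pow_succ]
      exact Set.mul_subset_mul_right (support_convPow_subset μ n)

lemma finsum_convPow {μ : G → ℝ} (hμ : (support μ).Finite) (n : ℕ) :
    ∑ᶠ g, convPow μ n g = (∑ᶠ g, μ g) ^ n := by
  classical
  obtain ⟨s, hs⟩ := hμ.exists_finset_coe
  induction n with
  | zero => rw [convPow, pow_zero, ← finsum_mem_def, finsum_mem_singleton]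
  | succ n ih =>
      have hfin : (support (convPow μ n)).Finite :=
        (s ^ n).finite_toSet.subset (by simpa [← hs] using support_convPow_subset μ n)
      rw [convPow, finsum_convMeas hfin hμ, ih, pow_succ]

end Convolution

section WordLength

variable {G : Type*} [Group G] {S : Set G} {n : ℕ} {g : G}

lemma mem_pow_iff_exists_list :
    g ∈ S ^ n ↔ ∃ w : List G, (∀ x ∈ w, x ∈ S) ∧ w.length = n ∧ w.prod = g := by
  rw [Set.mem_pow]
  constructor
  · rintro ⟨f, rfl⟩
    exact ⟨List.ofFn fun i => (f i : G), by simp, List.length_ofFn, rfl⟩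
  · rintro ⟨w, hwS, rfl, rfl⟩
    exact ⟨fun i => ⟨w[i], hwS _ (List.getElem_mem _)⟩, by simp⟩

lemma wordLength_eq_sInf : wordLength S g = sInf {n | g ∈ S ^ n} := by
  simp only [wordLength, mem_pow_iff_exists_list]

lemma wordLength_le_of_mem_pow (hg : g ∈ S ^ n) : wordLength S g ≤ n := by
  rw [wordLength_eq_sInf]
  exact Nat.sInf_le hg

lemma mem_pow_wordLength_of_mem_pow (hg : g ∈ S ^ n) : g ∈ S ^ wordLength S g := by
  rw [wordLength_eq_sInf]
  exact Nat.sInf_mem (⟨n, hg⟩ : {n | g ∈ S ^ n}.Nonempty)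

end WordLength

section Entropy

open Real

variable {α : Type*}

lemma shannonEntropy_eq_finsum_negMulLog (ν : α → ℝ) :
    shannonEntropy ν = ∑ᶠ a, negMulLog (ν a) := by
  simp only [shannonEntropy, ← finsum_neg_distrib, negMulLog, neg_mul]

lemma shannonEntropy_nonneg {ν : α → ℝ} (h0 : 0 ≤ ν) (h1 : ν ≤ 1) : 0 ≤ shannonEntropy ν := by
  rw [shannonEntropy_eq_finsum_negMulLog]
  exact finsum_nonneg fun a => negMulLog_nonneg (h0 a) (h1 a)

lemma negMulLog_le {x q : ℝ} (hx : 0 ≤ x) (hq : 0 < q) :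
    negMulLog x ≤ -(x * log q) + q - x := by
  rcases hx.eq_or_lt with rfl | hx
  · simpa using hq.le
  have key := mul_le_mul_of_nonneg_left (log_le_sub_one_of_pos (div_pos hq hx)) hx.le
  rw [log_div hq.ne' hx.ne', mul_sub, mul_sub, mul_div_cancel₀ q hx.ne', mul_one] at key
  rw [negMulLog, neg_mul]
  linarith

lemma shannonEntropy_le_of_forall_pos {ν q : α → ℝ} {T : Finset α} (hν : 0 ≤ ν)
    (hq : ∀ a ∈ T, 0 < q a) (hT : support ν ⊆ T) :
    shannonEntropy ν ≤ -∑ a ∈ T, ν a * log (q a) + ∑ a ∈ T, q a - ∑ a ∈ T, ν a := by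
  rw [shannonEntropy_eq_finsum_negMulLog,
    finsum_eq_sum_of_support_subset _ fun a ha => hT fun h => ha (by simp [h]),
    ← Finset.sum_neg_distrib, ← Finset.sum_add_distrib, ← Finset.sum_sub_distrib]
  exact Finset.sum_le_sum fun a ha => negMulLog_le (hν a) (hq a ha)

end Entropy

section Growth

variable {G : Type*} [Group G] [DecidableEq G]

lemma sum_inv_pow_wordLength_le {s : Finset G} (hs : s.Nonempty) (n : ℕ) :
    ∑ g ∈ s ^ n, ((2 * #s : ℝ) ^ wordLength (s : Set G) g)⁻¹ ≤ 2 := by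
  have hm : (0 : ℝ) < #s := by exact_mod_cast hs.card_pos
  have hmem : ∀ {k g}, g ∈ s ^ k ↔ g ∈ (s : Set G) ^ k := by
    intro k g; rw [← Finset.coe_pow, Finset.mem_coe]
  have hmaps : ∀ g ∈ s ^ n, wordLength (s : Set G) g ∈ range (n + 1) := fun g hg =>
    mem_range_succ_iff.2 (wordLength_le_of_mem_pow (hmem.1 hg))
  have hfiber : ∀ k, (s ^ n).filter (fun g => wordLength (s : Set G) g = k) ⊆ s ^ k := by
    intro k g hg
    obtain ⟨hgn, rfl⟩ := Finset.mem_filter.1 hg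
    exact hmem.2 (mem_pow_wordLength_of_mem_pow (hmem.1 hgn))
  calc ∑ g ∈ s ^ n, ((2 * #s : ℝ) ^ wordLength (s : Set G) g)⁻¹
      = ∑ k ∈ range (n + 1), ∑ g ∈ s ^ n with wordLength (s : Set G) g = k,
          ((2 * #s : ℝ) ^ k)⁻¹ := by
        rw [← Finset.sum_fiberwise_of_maps_to hmaps]
        refine Finset.sum_congr rfl fun k _ => Finset.sum_congr rfl fun g hg => ?_
        rw [(Finset.mem_filter.1 hg).2]
    _ ≤ ∑ k ∈ range (n + 1), ∑ _g ∈ s ^ k, ((2 * #s : ℝ) ^ k)⁻¹ :=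
        Finset.sum_le_sum fun k _ =>
          Finset.sum_le_sum_of_subset_of_nonneg (hfiber k) fun _ _ _ => by positivity
    _ ≤ ∑ k ∈ range (n + 1), (1 / 2 : ℝ) ^ k := by
        refine Finset.sum_le_sum fun k _ => ?_
        calc ∑ _g ∈ s ^ k, ((2 * #s : ℝ) ^ k)⁻¹ = #(s ^ k) * ((2 * #s : ℝ) ^ k)⁻¹ := by
              rw [Finset.sum_const, nsmul_eq_mul]
          _ ≤ (#s : ℝ) ^ k * ((2 * #s : ℝ) ^ k)⁻¹ := by gcongr; exact_mod_cast card_pow_le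
          _ = (1 / 2 : ℝ) ^ k := by rw [← inv_pow, ← mul_pow]; field_simp
    _ ≤ 2 := sum_geometric_two_le _

open Real in
lemma shannonEntropy_le_of_support_subset_pow {s : Finset G} (hs : s.Nonempty) {ν : G → ℝ}
    (hν : 0 ≤ ν) (hsum : ∑ᶠ g, ν g = 1) {n : ℕ} (hsupp : support ν ⊆ ↑(s ^ n)) :
    shannonEntropy ν ≤ log (2 * #s) * ∑ᶠ g, ν g * wordLength (s : Set G) g + 1 := by
  have hq : ∀ g ∈ s ^ n, 0 < ((2 * #s : ℝ) ^ wordLength (s : Set G) g)⁻¹ := by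
    have : (0 : ℝ) < #s := by exact_mod_cast hs.card_pos
    intro g _; positivity
  have hmass : ∑ g ∈ s ^ n, ν g = 1 := hsum ▸ (finsum_eq_sum_of_support_subset _ hsupp).symm
  have hmean : ∑ᶠ g, ν g * wordLength (s : Set G) g
      = ∑ g ∈ s ^ n, ν g * wordLength (s : Set G) g :=
    finsum_eq_sum_of_support_subset _ fun g hg => hsupp (left_ne_zero_of_mul hg)
  have hcross : -∑ g ∈ s ^ n, ν g * log ((2 * #s : ℝ) ^ wordLength (s : Set G) g)⁻¹
      = log (2 * #s) * ∑ᶠ g, ν g * wordLength (s : Set G) g := by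
    simp only [hmean, log_inv, log_pow, Finset.mul_sum, ← Finset.sum_neg_distrib]
    exact Finset.sum_congr rfl fun g _ => by ring
  have := shannonEntropy_le_of_forall_pos hν hq hsupp
  linarith [sum_inv_pow_wordLength_le hs n]

end Growth

theorem entropy_eq_zero_of_drift_eq_zero_general {G : Type*} [Group G]
    (S : Set G)
    (hSfin : S.Finite)
    (μ : G → ℝ) (hpos : ∀ g, 0 ≤ μ g) (hsum : ∑ᶠ g, μ g = 1)
    (hsupp : Function.support μ = S)
    (h : ℝ)
    (hh : Tendsto (fun n : ℕ => shannonEntropy (convPow μ n) / (n : ℝ)) atTop (nhds h))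
    (hl : Tendsto (fun n : ℕ => meanLength S μ n / (n : ℝ)) atTop (nhds 0)) :
    h = 0 := by
  classical
  obtain ⟨s, rfl⟩ := hSfin.exists_finset_coe
  have hs : s.Nonempty := by
    rw [Finset.nonempty_iff_ne_empty]
    rintro rfl
    simp_all
  have hν : ∀ n, 0 ≤ convPow μ n := convPow_nonneg hpos
  have hνsupp : ∀ n, support (convPow μ n) ⊆ ↑(s ^ n) := fun n => by
    simpa [Finset.coe_pow, hsupp] using support_convPow_subset μ n
  have hνsum : ∀ n, ∑ᶠ g, convPow μ n g = 1 := fun n => by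
    rw [finsum_convPow (hsupp ▸ s.finite_toSet), hsum, one_pow]
  have hlower : ∀ n, 0 ≤ shannonEntropy (convPow μ n) / n := fun n =>
    div_nonneg (shannonEntropy_nonneg (hν n) fun g =>
      (single_le_finsum g ((s ^ n).finite_toSet.subset (hνsupp n)) (hν n)).trans (hνsum n).le)
      n.cast_nonneg
  have hupper : ∀ n, shannonEntropy (convPow μ n) / n
      ≤ Real.log (2 * #s) * (meanLength s μ n / n) + 1 / n := fun n => by
    rw [mul_div_assoc', ← add_div]
    exact div_le_div_of_nonneg_right
      (shannonEntropy_le_of_support_subset_pow hs (hν n) (hνsum n) (hνsupp n)) n.cast_nonneg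
  have hbound : Tendsto (fun n : ℕ => Real.log (2 * #s) * (meanLength s μ n / n) + 1 / n)
      atTop (nhds 0) := by
    simpa using (hl.const_mul _).add tendsto_one_div_atTop_nhds_zero_nat
  exact le_antisymm (le_of_tendsto_of_tendsto' hh hbound hupper) (ge_of_tendsto' hh hlower)

/-- If the drift `l(μ)` is zero, then the entropy `h(G, μ)` is zero. -/
theorem entropy_eq_zero_of_drift_eq_zero {G : Type*} [Group G] [Countable G] [Infinite G]
    (S : Set G)
    (hSfin : S.Finite) (hSsym : ∀ s ∈ S, s⁻¹ ∈ S) (hSone : (1 : G) ∉ S)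
    (hSgen : Subgroup.closure S = ⊤)
    (μ : G → ℝ) (hpos : ∀ g, 0 ≤ μ g) (hsum : ∑ᶠ g, μ g = 1)
    (hμsym : ∀ g, μ g = μ g⁻¹) (hsupp : Function.support μ = S)
    (v h : ℝ)
    (hv : Tendsto (fun n : ℕ => Real.log ((wordSphere S n).ncard : ℝ) / (n : ℝ)) atTop
      (nhds v))
    (hh : Tendsto (fun n : ℕ => shannonEntropy (convPow μ n) / (n : ℝ)) atTop (nhds h))
    (hl : Tendsto (fun n : ℕ => meanLength S μ n / (n : ℝ)) atTop (nhds 0)) :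
    h = 0 :=
  entropy_eq_zero_of_drift_eq_zero_general S hSfin μ hpos hsum hsupp h hh hl
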